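/- Let A be an almost Kähler–Poisson algebra with tangent space X(A) and covariant derivative ∇. If X, Y ∈ X(A) then [X,Y] ∈ X(A), and the covariant derivative has no torsion: ∇_X Y − ∇_Y X − [X,Y] = 0 for all X, Y ∈ X(A). -/

import Mathlib

open scoped BigOperators

namespace KPA

/-- The field of fractions of the polynomial ring `ℂ[x¹,…,xᵐ]`. -/
abbrev A (m : ℕ) := FractionRing (MvPolynomial (Fin m) ℂ)

/-- The generators `x^i` of `A m`. -/
noncomputable def Xg {m : ℕ} (i : Fin m) : A m :=
  algebraMap (MvPolynomial (Fin m) ℂ) (A m) (MvPolynomial.X i)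

/-- The image of a complex constant in `A m`. -/
noncomputable def cC {m : ℕ} (z : ℂ) : A m :=
  algebraMap (MvPolynomial (Fin m) ℂ) (A m) (MvPolynomial.C z)

/-- An almost Kähler–Poisson algebra: the field of fractions `A m` of `ℂ[x¹,…,xᵐ]`,
equipped with a ∗-structure `st` fixing the generators, a Poisson bracket `br`
compatible with ∗, and an invertible hermitian element `γ2` such that
`P^i_k P^k_l P^l_j = -γ² P^i_j` where `P^{ij} = {x^i, x^j}`. -/
structure AKP (m : ℕ) where
  br : A m → A m → A m
  st : A m → A m
  br_add_left : ∀ a b c, br (a + b) c = br a c + br b c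
  br_antisymm : ∀ a b, br a b = - br b a
  br_leibniz : ∀ a b c, br a (b * c) = br a b * c + b * br a c
  br_jacobi : ∀ a b c, br a (br b c) + br b (br c a) + br c (br a b) = 0
  br_const : ∀ (z : ℂ) (a : A m), br (cC z) a = 0
  st_add : ∀ a b, st (a + b) = st a + st b
  st_mul : ∀ a b, st (a * b) = st a * st b
  st_invol : ∀ a, st (st a) = a
  st_const : ∀ z : ℂ, st (cC z) = cC (starRingEnd ℂ z)
  st_x : ∀ i, st (Xg i) = Xg i
  st_br : ∀ a b, st (br a b) = br (st a) (st b)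
  γ2 : A m
  γ2_ne : γ2 ≠ 0
  γ2_herm : st γ2 = γ2
  akp : ∀ i j, (∑ k, ∑ l, br (Xg i) (Xg k) * br (Xg k) (Xg l) * br (Xg l) (Xg j))
      = - γ2 * br (Xg i) (Xg j)

namespace AKP

variable {m : ℕ} (S : AKP m)

/-- `P^{ij} = {x^i, x^j}`. -/
noncomputable def P (i j : Fin m) : A m := S.br (Xg i) (Xg j)

/-- `D^i(u) = γ^{-2} {u, x^k} P^i_k`. -/
noncomputable def D (u : A m) (i : Fin m) : A m := S.γ2⁻¹ * ∑ k, S.br u (Xg k) * S.P i k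

/-- `D^{ik} = D^i(x^k)`. -/
noncomputable def Dm (i k : Fin m) : A m := S.D (Xg k) i

/-- Membership in the tangent space `X(A) = {D(X) : X ∈ Der(A)}` (in components). -/
def tang (T : Fin m → A m) : Prop := ∃ V : Fin m → A m, ∀ i, T i = ∑ k, S.Dm i k * V k

/-- The tangent space `X(A)` as a submodule of `A^m` : the range of the projection `D`. -/
noncomputable def tSp : Submodule (A m) (Fin m → A m) :=
  LinearMap.range (Matrix.mulVecLin (Matrix.of fun i k => S.Dm i k))

/-- Action `X(u) = X^i D_i(u)` of a tangent vector on an element. -/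
noncomputable def act (X : Fin m → A m) (u : A m) : A m := ∑ i, X i * S.D u i

/-- The covariant derivative `∇_X Y = D^{ik} X^l D_l(Y_k) ∂_i` (in components). -/
noncomputable def nab (X Y : Fin m → A m) (i : Fin m) : A m :=
  ∑ k, S.Dm i k * ∑ l, X l * S.D (Y k) l

/-- The commutator `[X,Y]^i = X(Y^i) - Y(X^i)`. -/
noncomputable def lie (X Y : Fin m → A m) (i : Fin m) : A m := S.act X (Y i) - S.act Y (X i)

/-- The curvature `R(X,Y)Z = ∇_X ∇_Y Z - ∇_Y ∇_X Z - ∇_{[X,Y]} Z`. -/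
noncomputable def curv (X Y Z : Fin m → A m) (i : Fin m) : A m :=
  S.nab X (S.nab Y Z) i - S.nab Y (S.nab X Z) i - S.nab (S.lie X Y) Z i

/-- The bilinear form `(X,Y) = X^i Y_i`. -/
noncomputable def ipa (_S : AKP m) (X Y : Fin m → A m) : A m := ∑ i, X i * Y i

/-- `R(X,Y,Z,V) = (R(Z,V)Y, X)`. -/
noncomputable def Rq (X Y Z V : Fin m → A m) : A m := S.ipa (S.curv Z V Y) X

/-- `(∇_X R)(Y,Z,V)`, the covariant derivative of the curvature tensor. -/
noncomputable def nabR (X Y Z V : Fin m → A m) (i : Fin m) : A m :=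
  S.nab X (S.curv Y Z V) i - S.curv (S.nab X Y) Z V i
    - S.curv Y (S.nab X Z) V i - S.curv Y Z (S.nab X V) i

/-- `Π^{ij} = δ^{ij} - D^{ij}`. -/
noncomputable def Pim (i j : Fin m) : A m := (if i = j then 1 else 0) - S.Dm i j

/-- The positivity preorder: `a ≥ 0` iff `a = (∑ uᵢ* uᵢ)/(∑ vₖ* vₖ)`. -/
def pos (a : A m) : Prop :=
  ∃ (N N' : ℕ) (u : Fin N → A m) (v : Fin N' → A m),
    a = (∑ i, S.st (u i) * u i) / (∑ k, S.st (v k) * v k)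

end AKP
end KPA

/-! The matrix `D = (D^{ik})` equals `-γ⁻² P²`, so the identity `P³ = -γ² P` gives
`D P = P`: the tangent space is the column span of `P`, and `D` is the identity on it.
For every `f` the Hamiltonian vector `({x^i, f})ᵢ` lies in this span, because the set of
such `f` is a subfield of `A` containing the generators. A tangent vector `X` acts as the
derivation `u ↦ μ_a {u, x^a}` with `μ = γ⁻² Xᵀ P`; by the Jacobi identity the commutator
of two such derivations is again of this form plus a combination of the Hamiltonian
derivations `{·, P^{ab}}`, so `[X,Y]` lies in the span of `P`. Torsion-freeness follows
since `∇_X Y - ∇_Y X = D [X,Y]`. -/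

open Matrix

namespace KPA.AKP

variable {m : ℕ} (S : AKP m)

lemma br_zero_left (a : A m) : S.br 0 a = 0 := by
  simpa using S.br_add_left 0 0 a

lemma br_zero_right (a : A m) : S.br a 0 = 0 := by
  rw [S.br_antisymm, br_zero_left, neg_zero]

lemma br_add_right (a b c : A m) : S.br a (b + c) = S.br a b + S.br a c := by
  rw [S.br_antisymm, S.br_add_left, S.br_antisymm b a, S.br_antisymm c a, neg_add, neg_neg,
    neg_neg]

lemma br_neg_right (a b : A m) : S.br a (-b) = -S.br a b := by
  rw [eq_neg_iff_add_eq_zero, ← br_add_right, neg_add_cancel, br_zero_right]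

lemma br_one_right (a : A m) : S.br a 1 = 0 := by
  simpa using S.br_leibniz a 1 1

lemma br_mul_left (a b c : A m) : S.br (a * b) c = S.br a c * b + a * S.br b c := by
  rw [S.br_antisymm, S.br_leibniz, S.br_antisymm a c, S.br_antisymm b c]
  ring

lemma br_inv_right (a b : A m) : S.br a b⁻¹ = -(b⁻¹ * b⁻¹) * S.br a b := by
  rcases eq_or_ne b 0 with rfl | hb
  · simp [br_zero_right]
  have h := S.br_leibniz a b b⁻¹
  rw [mul_inv_cancel₀ hb, br_one_right] at h
  have key : b * (S.br a b⁻¹ + b⁻¹ * b⁻¹ * S.br a b) = 0 := by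
    rw [mul_add, ← mul_assoc, ← mul_assoc, mul_inv_cancel₀ hb, one_mul]
    linear_combination -h
  linear_combination (mul_eq_zero.mp key).resolve_left hb

lemma br_cC_right (a : A m) (z : ℂ) : S.br a (cC z) = 0 := by
  rw [S.br_antisymm, S.br_const, neg_zero]

lemma br_br_sub_br_br (u a b : A m) :
    S.br (S.br u a) b - S.br (S.br u b) a = S.br u (S.br a b) := by
  have h := S.br_jacobi a b u
  rw [S.br_antisymm b u, br_neg_right, S.br_antisymm a, S.br_antisymm b (S.br u a)] at h
  linear_combination -h

lemma P_antisymm (i j : Fin m) : S.P i j = -S.P j i := S.br_antisymm _ _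

noncomputable def Pmat : Matrix (Fin m) (Fin m) (A m) := Matrix.of S.P

noncomputable def Dmat : Matrix (Fin m) (Fin m) (A m) := Matrix.of fun i k => S.Dm i k

noncomputable def hamSpan : Submodule (A m) (Fin m → A m) := LinearMap.range S.Pmat.mulVecLin

lemma Pmat_mul_Pmat_mul_Pmat : S.Pmat * S.Pmat * S.Pmat = -S.γ2 • S.Pmat := by
  ext i j
  have h := S.akp i j
  simp only [Pmat, mul_apply, of_apply, Matrix.smul_apply, smul_eq_mul, Finset.sum_mul]
  rw [Finset.sum_comm]
  exact h

lemma Dmat_eq : S.Dmat = -S.γ2⁻¹ • (S.Pmat * S.Pmat) := by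
  ext i k
  simp only [Dmat, Dm, D, Pmat, of_apply, Matrix.smul_apply, mul_apply, smul_eq_mul, neg_mul,
    ← mul_neg, ← Finset.sum_neg_distrib]
  congr 1
  refine Finset.sum_congr rfl fun l _ => ?_
  rw [← P, S.P_antisymm l k]
  ring

lemma Dmat_mul_Pmat : S.Dmat * S.Pmat = S.Pmat := by
  rw [Dmat_eq, Matrix.smul_mul, Pmat_mul_Pmat_mul_Pmat, smul_smul]
  simp [S.γ2_ne]

lemma Dm_comm (i k : Fin m) : S.Dm i k = S.Dm k i := by
  simp only [Dm, D, P, mul_comm]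

lemma tang_iff_mem_tSp (T : Fin m → A m) : S.tang T ↔ T ∈ S.tSp := by
  simp only [tang, tSp, LinearMap.mem_range, mulVecLin_apply, funext_iff, eq_comm (a := T _)]
  rfl

lemma tSp_eq_hamSpan : S.tSp = S.hamSpan := by
  rw [hamSpan]
  apply le_antisymm
  · rw [tSp, ← Dmat, Dmat_eq, ← Matrix.mul_smul, mulVecLin_mul]
    exact LinearMap.range_comp_le_range _ _
  · conv_lhs => rw [← Dmat_mul_Pmat, mulVecLin_mul]
    exact LinearMap.range_comp_le_range _ _

lemma Dmat_mulVec_of_mem_tSp {T : Fin m → A m} (hT : T ∈ S.tSp) : S.Dmat *ᵥ T = T := by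
  rw [tSp_eq_hamSpan] at hT
  obtain ⟨ξ, rfl⟩ := hT
  rw [mulVecLin_apply, mulVec_mulVec, Dmat_mul_Pmat]

noncomputable def ham (f : A m) : Fin m → A m := fun i => S.br (Xg i) f

noncomputable def hamSubfield : Subfield (A m) where
  carrier := {f | S.ham f ∈ S.hamSpan}
  zero_mem' := by
    show S.ham 0 ∈ S.hamSpan
    rw [show S.ham 0 = 0 from funext fun _ => S.br_zero_right _]
    exact zero_mem _
  one_mem' := by
    show S.ham 1 ∈ S.hamSpan
    rw [show S.ham 1 = 0 from funext fun _ => S.br_one_right _]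
    exact zero_mem _
  add_mem' {f g} hf hg := by
    show S.ham (f + g) ∈ S.hamSpan
    rw [show S.ham (f + g) = S.ham f + S.ham g from funext fun _ => S.br_add_right _ f g]
    exact add_mem hf hg
  neg_mem' {f} hf := by
    show S.ham (-f) ∈ S.hamSpan
    rw [show S.ham (-f) = -S.ham f from funext fun _ => S.br_neg_right _ f]
    exact neg_mem hf
  mul_mem' {f g} hf hg := by
    show S.ham (f * g) ∈ S.hamSpan
    have hfg : S.ham (f * g) = g • S.ham f + f • S.ham g := by
      ext i
      simp only [ham, S.br_leibniz, Pi.add_apply, Pi.smul_apply, smul_eq_mul]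
      ring
    rw [hfg]
    exact add_mem (Submodule.smul_mem _ g hf) (Submodule.smul_mem _ f hg)
  inv_mem' f hf := by
    show S.ham f⁻¹ ∈ S.hamSpan
    rw [show S.ham f⁻¹ = (-(f⁻¹ * f⁻¹)) • S.ham f from
      funext fun _ => S.br_inv_right _ f]
    exact Submodule.smul_mem _ _ hf

lemma algebraMap_mem_hamSubfield (p : MvPolynomial (Fin m) ℂ) :
    algebraMap _ (A m) p ∈ S.hamSubfield := by
  induction p using MvPolynomial.induction_on with
  | C z =>
    show S.ham (cC z) ∈ S.hamSpan
    rw [show S.ham (cC z) = 0 from funext fun _ => S.br_cC_right _ z]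
    exact zero_mem _
  | add p q hp hq => rw [map_add]; exact add_mem hp hq
  | mul_X p k hp =>
    rw [map_mul]
    refine mul_mem hp ?_
    show S.ham (Xg k) ∈ S.hamSpan
    exact ⟨Pi.single k 1, by ext i; simp [Pmat, P, ham]⟩

lemma ham_mem_hamSpan (f : A m) : S.ham f ∈ S.hamSpan := by
  obtain ⟨p, q, -, rfl⟩ := IsFractionRing.div_surjective (MvPolynomial (Fin m) ℂ) f
  exact div_mem (S.algebraMap_mem_hamSubfield p) (S.algebraMap_mem_hamSubfield q)

noncomputable def hamDer (μ : Fin m → A m) (u : A m) : A m := ∑ a, μ a * S.br u (Xg a)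

lemma hamDer_add (μ : Fin m → A m) (u v : A m) :
    S.hamDer μ (u + v) = S.hamDer μ u + S.hamDer μ v := by
  simp only [hamDer, S.br_add_left, mul_add, Finset.sum_add_distrib]

lemma hamDer_mul (μ : Fin m → A m) (u v : A m) :
    S.hamDer μ (u * v) = S.hamDer μ u * v + u * S.hamDer μ v := by
  simp only [hamDer, br_mul_left, Finset.sum_mul, Finset.mul_sum, ← Finset.sum_add_distrib]
  exact Finset.sum_congr rfl fun a _ => by ring

lemma hamDer_sum (μ f : Fin m → A m) : S.hamDer μ (∑ a, f a) = ∑ a, S.hamDer μ (f a) :=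
  map_sum (AddMonoidHom.mk' (S.hamDer μ) (S.hamDer_add μ)) f Finset.univ

lemma hamDer_Xg (μ : Fin m → A m) (i : Fin m) : S.hamDer μ (Xg i) = (S.Pmat *ᵥ μ) i := by
  simp only [hamDer, mulVec, dotProduct, Pmat, of_apply, P]
  exact Finset.sum_congr rfl fun a _ => mul_comm _ _

lemma hamDer_hamDer (μ ν : Fin m → A m) (u : A m) :
    S.hamDer μ (S.hamDer ν u) = ∑ a, S.hamDer μ (ν a) * S.br u (Xg a)
      + ∑ a, ∑ b, ν a * μ b * S.br (S.br u (Xg a)) (Xg b) := by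
  rw [show S.hamDer ν u = ∑ a, ν a * S.br u (Xg a) from rfl, hamDer_sum]
  simp only [hamDer_mul, Finset.sum_add_distrib]
  simp only [hamDer, Finset.mul_sum, mul_assoc]

lemma hamDer_commutator (μ ν : Fin m → A m) (u : A m) :
    S.hamDer μ (S.hamDer ν u) - S.hamDer ν (S.hamDer μ u)
      = S.hamDer (fun a => S.hamDer μ (ν a) - S.hamDer ν (μ a)) u
        + ∑ a, ∑ b, μ b * ν a * S.br u (S.P a b) := by
  simp only [hamDer_hamDer, P, ← br_br_sub_br_br, mul_sub, Finset.sum_sub_distrib]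
  rw [Finset.sum_comm (f := fun a b => μ a * ν b * S.br (S.br u (Xg a)) (Xg b))]
  simp only [hamDer, sub_mul, Finset.sum_sub_distrib, mul_comm (μ _) (ν _)]
  ring

lemma act_eq_hamDer (X : Fin m → A m) (u : A m) :
    S.act X u = S.hamDer (S.γ2⁻¹ • X ᵥ* S.Pmat) u := by
  simp only [act, D, hamDer, vecMul, dotProduct, Pi.smul_apply, smul_eq_mul, Pmat, of_apply,
    Finset.mul_sum, Finset.sum_mul]
  rw [Finset.sum_comm]
  exact Finset.sum_congr rfl fun k _ => Finset.sum_congr rfl fun j _ => by ring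

lemma act_Xg_of_mem_tSp {X : Fin m → A m} (hX : X ∈ S.tSp) (i : Fin m) :
    S.act X (Xg i) = X i := by
  conv_rhs => rw [← S.Dmat_mulVec_of_mem_tSp hX]
  simp only [act, mulVec, dotProduct, Dmat, of_apply]
  exact Finset.sum_congr rfl fun j _ => by rw [mul_comm, S.Dm_comm i j]; rfl

lemma lie_mem_tSp {X Y : Fin m → A m} (hX : X ∈ S.tSp) (hY : Y ∈ S.tSp) :
    S.lie X Y ∈ S.tSp := by
  set μ := S.γ2⁻¹ • X ᵥ* S.Pmat
  set ν := S.γ2⁻¹ • Y ᵥ* S.Pmat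
  have hactX : S.act X = S.hamDer μ := funext (S.act_eq_hamDer X)
  have hactY : S.act Y = S.hamDer ν := funext (S.act_eq_hamDer Y)
  clear_value μ ν
  have hlie : S.lie X Y = S.Pmat *ᵥ (fun a => S.hamDer μ (ν a) - S.hamDer ν (μ a))
      + ∑ a, ∑ b, (μ b * ν a) • S.ham (S.P a b) := by
    ext i
    have hXi : X i = S.hamDer μ (Xg i) := by rw [← hactX, S.act_Xg_of_mem_tSp hX]
    have hYi : Y i = S.hamDer ν (Xg i) := by rw [← hactY, S.act_Xg_of_mem_tSp hY]
    rw [lie, hactX, hactY, hXi, hYi, hamDer_commutator, hamDer_Xg]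
    simp only [Pi.add_apply, Finset.sum_apply, Pi.smul_apply, smul_eq_mul, ham]
  rw [hlie, tSp_eq_hamSpan]
  exact add_mem (LinearMap.mem_range_self _ _)
    (sum_mem fun a _ => sum_mem fun b _ => Submodule.smul_mem _ _ (S.ham_mem_hamSpan _))

lemma nab_sub_nab (X Y : Fin m → A m) (i : Fin m) :
    S.nab X Y i - S.nab Y X i = (S.Dmat *ᵥ S.lie X Y) i := by
  simp only [nab, lie, act, mulVec, dotProduct, Dmat, of_apply, Finset.sum_sub_distrib, mul_sub]

end KPA.AKP

/-- If `X, Y ∈ X(A)` then `[X,Y] ∈ X(A)`, and the covariant derivative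
has no torsion: `∇_X Y − ∇_Y X − [X,Y] = 0`. -/
theorem statement_13 {m : ℕ} (S : KPA.AKP m) (X Y : Fin m → KPA.A m)
    (hX : S.tang X) (hY : S.tang Y) :
    S.tang (S.lie X Y) ∧ ∀ i, S.nab X Y i - S.nab Y X i - S.lie X Y i = 0 := by
  rw [S.tang_iff_mem_tSp] at hX hY
  have hlie := S.lie_mem_tSp hX hY
  refine ⟨(S.tang_iff_mem_tSp _).mpr hlie, fun i => ?_⟩
  rw [S.nab_sub_nab, S.Dmat_mulVec_of_mem_tSp hlie, sub_self]
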